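/- arXiv:2308.15463 — 2 statements merged into one kernel-verified Lean document; each statement's English description precedes it below -/
import Mathlib

section
/- Let d ≥ 1 and let μ_H be the normalized Haar probability measure on the unitary group U(d). Then for all indices i, j, k, l ∈ Fin d, the first-moment Haar integral of matrix entries satisfies ∫ conj(U_{i j}) · U_{k l} dμ_H(U) = (1/d) if i = k and j = l, and equals 0 otherwise. -/
open MeasureTheory Matrix

noncomputable instance unitaryGroupMeasurableSpace {n : Type*} [Fintype n] [DecidableEq n] :
    MeasurableSpace (Matrix.unitaryGroup n ℂ) := borel _

instance unitaryGroupBorelSpace {n : Type*} [Fintype n] [DecidableEq n] :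
    BorelSpace (Matrix.unitaryGroup n ℂ) := ⟨rfl⟩

section Aux

variable {d : ℕ}

/-- Continuity of a matrix entry of a unitary. -/
lemma continuous_entry (a b : Fin d) :
    Continuous (fun U : Matrix.unitaryGroup (Fin d) ℂ =>
      (U : Matrix (Fin d) (Fin d) ℂ) a b) :=
  (continuous_apply b).comp ((continuous_apply a).comp continuous_subtype_val)

/-- Each product of two entries (one conjugated) is integrable. -/
lemma integrable_entry_mul (μH : Measure (Matrix.unitaryGroup (Fin d) ℂ))
    [IsProbabilityMeasure μH] (a b c e : Fin d) :
    Integrable (fun U : Matrix.unitaryGroup (Fin d) ℂ =>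
      (starRingEnd ℂ) ((U : Matrix (Fin d) (Fin d) ℂ) a b) *
        (U : Matrix (Fin d) (Fin d) ℂ) c e) μH := by
  apply Integrable.mono' (integrable_const (1 : ℝ))
  · exact (((continuous_entry a b).star.mul (continuous_entry c e))).aestronglyMeasurable
  · filter_upwards with U
    have h1 := entry_norm_bound_of_unitary U.2 a b
    have h2 := entry_norm_bound_of_unitary U.2 c e
    calc ‖(starRingEnd ℂ) (U.1 a b) * U.1 c e‖
        = ‖U.1 a b‖ * ‖U.1 c e‖ := by
          rw [norm_mul, RCLike.norm_conj]
      _ ≤ 1 * 1 := by gcongr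
      _ = 1 := one_mul 1

/-- The diagonal sign matrix (-1 at `i`, 1 elsewhere) is unitary. -/
lemma signMatrix_mem (i : Fin d) :
    Matrix.diagonal (fun m : Fin d => if m = i then (-1 : ℂ) else 1) ∈
      Matrix.unitaryGroup (Fin d) ℂ := by
  rw [Matrix.mem_unitaryGroup_iff']
  rw [star_eq_conjTranspose, Matrix.diagonal_conjTranspose,
    Matrix.diagonal_mul_diagonal]
  ext a b
  by_cases h : a = i <;>
    simp [Matrix.diagonal_apply, Matrix.one_apply, h, Pi.star_apply]

/-- A permutation matrix is unitary. -/
lemma permMatrix_mem (σ : Equiv.Perm (Fin d)) :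
    σ.permMatrix ℂ ∈ Matrix.unitaryGroup (Fin d) ℂ := by
  rw [Matrix.mem_unitaryGroup_iff']
  have hstar : star (σ.permMatrix ℂ) = (σ⁻¹).permMatrix ℂ := by
    ext a b
    simp only [star_eq_conjTranspose, Matrix.conjTranspose_apply,
      PEquiv.toMatrix_apply, Equiv.toPEquiv_apply, Option.mem_def,
      Option.some.injEq]
    by_cases h : a = σ b
    · subst h
      simp
    · have h' : ¬ σ⁻¹ a = b := fun hb => h (by rw [← hb]; simp)
      rw [if_neg (fun hh : σ b = a => h hh.symm), if_neg h']
      exact star_zero ℂ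
  rw [hstar]
  show ((σ⁻¹).toPEquiv.toMatrix : Matrix (Fin d) (Fin d) ℂ) * σ.toPEquiv.toMatrix = 1
  rw [← PEquiv.toMatrix_trans, ← Equiv.toPEquiv_trans]
  have : (σ⁻¹ : Equiv.Perm (Fin d)).trans σ = Equiv.refl (Fin d) := by
    ext x; simp
  rw [this, Equiv.toPEquiv_refl, PEquiv.toMatrix_refl]

end Aux

/-- **First-moment Haar integral of matrix entries.** For `d ≥ 1` and the normalized Haar
probability measure `μH` on the unitary group `U(d)`, and all indices `i j k l`,
`∫ conj (U i j) * U k l dμH(U) = 1/d` if `i = k ∧ j = l`, and `0` otherwise. -/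
theorem first_moment_haar_unitary_entries
    (d : ℕ) (hd : 1 ≤ d)
    (μH : Measure (Matrix.unitaryGroup (Fin d) ℂ))
    [μH.IsHaarMeasure] [IsProbabilityMeasure μH]
    (i j k l : Fin d) :
    ∫ U : Matrix.unitaryGroup (Fin d) ℂ,
        (starRingEnd ℂ) ((U : Matrix (Fin d) (Fin d) ℂ) i j) *
          (U : Matrix (Fin d) (Fin d) ℂ) k l ∂μH
      = if i = k ∧ j = l then (1 / d : ℂ) else 0 := by
  by_cases hik : i = k
  · subst hik
    -- the value ∫ conj (U m j) * U m l is independent of the row m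
    have hconst : ∀ m m' : Fin d,
        (∫ U : Matrix.unitaryGroup (Fin d) ℂ,
          (starRingEnd ℂ) ((U : Matrix (Fin d) (Fin d) ℂ) m j) *
            (U : Matrix (Fin d) (Fin d) ℂ) m l ∂μH)
        = ∫ U : Matrix.unitaryGroup (Fin d) ℂ,
          (starRingEnd ℂ) ((U : Matrix (Fin d) (Fin d) ℂ) m' j) *
            (U : Matrix (Fin d) (Fin d) ℂ) m' l ∂μH := by
      intro m m'
      set σ : Equiv.Perm (Fin d) := Equiv.swap m m'
      set P : Matrix.unitaryGroup (Fin d) ℂ := ⟨σ.permMatrix ℂ, permMatrix_mem σ⟩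
      have key := MeasureTheory.integral_mul_left_eq_self
        (μ := μH)
        (fun U : Matrix.unitaryGroup (Fin d) ℂ =>
          (starRingEnd ℂ) ((U : Matrix (Fin d) (Fin d) ℂ) m j) *
            (U : Matrix (Fin d) (Fin d) ℂ) m l) P
      have hentry : ∀ (U : Matrix.unitaryGroup (Fin d) ℂ) (a b : Fin d),
          ((P * U : Matrix.unitaryGroup (Fin d) ℂ) : Matrix (Fin d) (Fin d) ℂ) a b
            = (U : Matrix (Fin d) (Fin d) ℂ) (σ a) b := by
        intro U a b
        show (σ.permMatrix ℂ * (U : Matrix (Fin d) (Fin d) ℂ)) a b = _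
        rw [show σ.permMatrix ℂ = σ.toPEquiv.toMatrix from rfl,
          PEquiv.toMatrix_toPEquiv_mul]
        simp [Matrix.submatrix_apply]
      rw [← key]
      apply MeasureTheory.integral_congr_ae
      filter_upwards with U
      rw [hentry U m j, hentry U m l]
      simp [σ, Equiv.swap_apply_left]
    -- summing over rows gives the entry (j,l) of star U * U = 1
    have hsum :
        (∑ m : Fin d, ∫ U : Matrix.unitaryGroup (Fin d) ℂ,
          (starRingEnd ℂ) ((U : Matrix (Fin d) (Fin d) ℂ) m j) *
            (U : Matrix (Fin d) (Fin d) ℂ) m l ∂μH)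
        = if j = l then 1 else 0 := by
      rw [← MeasureTheory.integral_finset_sum _
        (fun m _ => integrable_entry_mul μH m j m l)]
      have : ∀ U : Matrix.unitaryGroup (Fin d) ℂ,
          (∑ m : Fin d, (starRingEnd ℂ) ((U : Matrix (Fin d) (Fin d) ℂ) m j) *
            (U : Matrix (Fin d) (Fin d) ℂ) m l)
          = if j = l then 1 else 0 := by
        intro U
        have hU : star (U : Matrix (Fin d) (Fin d) ℂ) * (U : Matrix (Fin d) (Fin d) ℂ)
            = 1 := U.2.1
        have := congrFun (congrFun hU j) l
        rw [Matrix.mul_apply] at this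
        simp only [star_eq_conjTranspose, Matrix.conjTranspose_apply] at this
        rw [Matrix.one_apply] at this
        rw [← this]
        exact Finset.sum_congr rfl (fun m _ => rfl)
      rw [MeasureTheory.integral_congr_ae (Filter.Eventually.of_forall this)]
      simp
    have hd0 : (d : ℂ) ≠ 0 := by
      exact_mod_cast Nat.cast_ne_zero.mpr (by omega)
    have hval : (d : ℂ) * (∫ U : Matrix.unitaryGroup (Fin d) ℂ,
        (starRingEnd ℂ) ((U : Matrix (Fin d) (Fin d) ℂ) i j) *
          (U : Matrix (Fin d) (Fin d) ℂ) i l ∂μH) = if j = l then 1 else 0 := by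
      rw [← hsum]
      rw [Finset.sum_congr rfl (fun m _ => hconst m i)]
      simp [Finset.sum_const, Finset.card_univ, mul_comm]
    by_cases hjl : j = l
    · subst hjl
      rw [if_pos ⟨rfl, rfl⟩]
      rw [if_pos rfl] at hval
      rw [eq_div_iff hd0]
      linear_combination hval
    · rw [if_neg (fun h => hjl h.2)]
      rw [if_neg hjl] at hval
      exact (mul_eq_zero.mp hval).resolve_left hd0
  · -- off-diagonal rows: use the sign matrix to show the integral vanishes
    rw [if_neg (fun h => hik h.1)]
    set v : Fin d → ℂ := fun m => if m = i then (-1 : ℂ) else 1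
    set D : Matrix.unitaryGroup (Fin d) ℂ := ⟨Matrix.diagonal v, signMatrix_mem i⟩
    have key := MeasureTheory.integral_mul_left_eq_self
      (μ := μH)
      (fun U : Matrix.unitaryGroup (Fin d) ℂ =>
        (starRingEnd ℂ) ((U : Matrix (Fin d) (Fin d) ℂ) i j) *
          (U : Matrix (Fin d) (Fin d) ℂ) k l) D
    have hentry : ∀ (U : Matrix.unitaryGroup (Fin d) ℂ) (a b : Fin d),
        ((D * U : Matrix.unitaryGroup (Fin d) ℂ) : Matrix (Fin d) (Fin d) ℂ) a b
          = v a * (U : Matrix (Fin d) (Fin d) ℂ) a b := by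
      intro U a b
      show (Matrix.diagonal v * (U : Matrix (Fin d) (Fin d) ℂ)) a b = _
      rw [Matrix.diagonal_mul]
    have hneg : (∫ U : Matrix.unitaryGroup (Fin d) ℂ,
        (starRingEnd ℂ) ((U : Matrix (Fin d) (Fin d) ℂ) i j) *
          (U : Matrix (Fin d) (Fin d) ℂ) k l ∂μH)
        = - ∫ U : Matrix.unitaryGroup (Fin d) ℂ,
        (starRingEnd ℂ) ((U : Matrix (Fin d) (Fin d) ℂ) i j) *
          (U : Matrix (Fin d) (Fin d) ℂ) k l ∂μH := by
      conv_lhs => rw [← key]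
      rw [← MeasureTheory.integral_neg]
      apply MeasureTheory.integral_congr_ae
      filter_upwards with U
      rw [hentry U i j, hentry U k l]
      have hvi : v i = -1 := if_pos rfl
      have hvk : v k = 1 := if_neg (fun h => hik h.symm)
      rw [hvi, hvk]
      simp
    exact add_self_eq_zero.mp (eq_neg_iff_add_eq_zero.mp hneg)
end

section
/- Let d ≥ 2 and let μ_H be the normalized Haar probability measure on the unitary group U(d). Then for all indices i₁ ≠ i₂ and j₁ ≠ j₂ in Fin d, ∫ conj(U_{i₁ j₁}) · conj(U_{i₂ j₂}) · U_{i₁ j₂} · U_{i₂ j₁} dμ_H(U) = − 1/( d (d² − 1) ). -/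
/-!
Averaging the column relations `∑ᵢ conj (U i j) * U i j' = δ j j'` against functions of a
single row, and permuting rows by left translation, gives linear relations between
`S = E|U₁₁|²`, `B = E|U₁₁|²|U₁₂|²`, `C = E|U₁₁|²|U₂₂|²` and the cross moments
`E = E[conj U₁₁ conj U₂₂ U₁₂ U₂₁]` and `E'` (the same with the columns exchanged):
`d S = 1`, `B + (d - 1) C = S` and `B + (d - 1) E = B + (d - 1) E' = 0`. The missing relation
`2 C = 2 B - E - E'` comes from invariance under a rotation in the plane of two rows, once the
terms that change under a phase of one row are averaged away. Solving gives
`E = -1/(d(d² - 1))`.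
-/

open MeasureTheory Matrix

open ComplexConjugate

namespace Matrix

variable {n : Type*} [Fintype n] [DecidableEq n]

theorem isCompact_unitaryGroup {𝕜 : Type*} [RCLike 𝕜] :
    IsCompact (unitaryGroup n 𝕜 : Set (Matrix n n 𝕜)) := by
  have hclosed : IsClosed (unitaryGroup n 𝕜 : Set (Matrix n n 𝕜)) := by
    have : (unitaryGroup n 𝕜 : Set (Matrix n n 𝕜)) = (fun A => A * star A) ⁻¹' {1} := by
      ext A; exact mem_unitaryGroup_iff
    rw [this]
    exact isClosed_singleton.preimage (by fun_prop)
  refine (isCompact_univ_pi fun _ => isCompact_univ_pi fun _ =>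
    isCompact_closedBall (0 : 𝕜) 1).of_isClosed_subset hclosed fun U hU i _ j _ => ?_
  simpa using entry_norm_bound_of_unitary hU i j

instance {𝕜 : Type*} [RCLike 𝕜] : CompactSpace (unitaryGroup n 𝕜) :=
  isCompact_iff_compactSpace.mp isCompact_unitaryGroup

theorem UnitaryGroup.sum_conj_mul_apply (U : unitaryGroup n ℂ) (j j' : n) :
    ∑ i, conj (U.1 i j) * U.1 i j' = if j = j' then 1 else 0 := by
  have h := congrFun (congrFun (UnitaryGroup.star_mul_self U) j) j'
  rw [Matrix.mul_apply, Matrix.one_apply] at h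
  simpa using h

def permUnitary (σ : Equiv.Perm n) : unitaryGroup n ℂ :=
  ⟨σ.permMatrix ℂ, by
    rw [mem_unitaryGroup_iff, star_eq_conjTranspose, conjTranspose_permMatrix, ← permMatrix_mul]
    simp⟩

theorem permUnitary_mul_val (σ : Equiv.Perm n) (U : unitaryGroup n ℂ) :
    (permUnitary σ * U).1 = U.1.submatrix σ id :=
  PEquiv.toMatrix_toPEquiv_mul σ _

noncomputable def rowPhase (a : n) (ω : unitary ℂ) : unitaryGroup n ℂ :=
  ⟨diagonal (Function.update (1 : n → ℂ) a ω), by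
    rw [mem_unitaryGroup_iff', star_eq_conjTranspose, diagonal_conjTranspose,
      diagonal_mul_diagonal, ← diagonal_one]
    congr 1
    ext k
    by_cases hk : k = a
    · subst hk; simpa using Unitary.coe_star_mul_self ω
    · simp [hk]⟩

theorem rowPhase_val_mul_apply (a : n) (ω : unitary ℂ) (M : Matrix n n ℂ) (i j : n) :
    ((rowPhase a ω).1 * M) i j = Function.update (1 : n → ℂ) a ω i * M i j :=
  diagonal_mul _ _ _ _

/-- The rotation by the angle with cosine `c` and sine `s` in the coordinate plane of `a, b`. -/
noncomputable def givens (a b : n) (c s : ℝ) : Matrix n n ℂ :=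
  1 + (c - 1) • (single a a 1 + single b b 1) + s • (single a b 1 - single b a 1)

theorem givens_mem_unitaryGroup {a b : n} (hab : a ≠ b) {c s : ℝ} (h : c ^ 2 + s ^ 2 = 1) :
    givens a b c s ∈ unitaryGroup n ℂ := by
  rw [givens, mem_unitaryGroup_iff]
  set P : Matrix n n ℂ := single a a 1 + single b b 1
  set J : Matrix n n ℂ := single a b 1 - single b a 1
  have hP : star P = P := by simp [P, star_eq_conjTranspose]
  have hJ : star J = -J := by simp [J, star_eq_conjTranspose]
  have hPP : P * P = P := by simp [P, add_mul, mul_add, single_mul_single_of_ne, hab, hab.symm]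
  have hPJ : P * J = J := by simp [P, J, add_mul, mul_sub, single_mul_single_of_ne, hab, hab.symm]
  have hJP : J * P = J := by
    simp [P, J, sub_mul, mul_add, single_mul_single_of_ne, hab, hab.symm]; abel
  have hJJ : J * J = -P := by
    simp [P, J, sub_mul, mul_sub, single_mul_single_of_ne, hab, hab.symm]; abel
  simp only [star_add, star_one, star_smul, star_trivial, hP, hJ]
  simp only [add_mul, mul_add, one_mul, mul_one, smul_mul_assoc, mul_smul_comm, hPP, hPJ, hJP,
    hJJ, smul_neg, mul_neg]
  linear_combination (norm := module) h • P

theorem givens_mul_apply_left {a b : n} (hab : a ≠ b) (c s : ℝ) (M : Matrix n n ℂ) (k : n) :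
    (givens a b c s * M) a k = c * M a k + s * M b k := by
  simp [givens, add_mul, sub_mul, single_mul_apply_of_ne, hab]

theorem givens_mul_apply_right {a b : n} (hab : a ≠ b) (c s : ℝ) (M : Matrix n n ℂ) (k : n) :
    (givens a b c s * M) b k = -s * M a k + c * M b k := by
  simp [givens, add_mul, sub_mul, single_mul_apply_of_ne, hab.symm]
  ring

end Matrix

theorem Fintype.sum_eq_add_card_sub_one_mul {n R : Type*} [Fintype n] [DecidableEq n] [Ring R]
    {f : n → R} (a : n) {x : R} (h : ∀ i ≠ a, f i = x) :
    ∑ i, f i = f a + (Fintype.card n - 1) * x := by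
  rw [Fintype.sum_eq_add_sum_compl a, Finset.sum_congr rfl fun i hi => h i (by simpa using hi),
    Finset.sum_const, Finset.card_compl, Finset.card_singleton, nsmul_eq_mul,
    Nat.cast_sub (Fintype.card_pos_iff.mpr ⟨a⟩)]
  simp

namespace UnitaryHaar

variable {n : Type*}

def normSqProd (M : Matrix n n ℂ) (i₁ j₁ i₂ j₂ : n) : ℂ :=
  conj (M i₁ j₁) * M i₁ j₁ * (conj (M i₂ j₂) * M i₂ j₂)

def crossProd (M : Matrix n n ℂ) (i₁ i₂ j₁ j₂ : n) : ℂ :=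
  conj (M i₁ j₁) * conj (M i₂ j₂) * M i₁ j₂ * M i₂ j₁

@[fun_prop]
theorem continuous_normSqProd (i₁ j₁ i₂ j₂ : n) :
    Continuous fun M : Matrix n n ℂ => normSqProd M i₁ j₁ i₂ j₂ := by
  unfold normSqProd; fun_prop

@[fun_prop]
theorem continuous_crossProd (i₁ i₂ j₁ j₂ : n) :
    Continuous fun M : Matrix n n ℂ => crossProd M i₁ i₂ j₁ j₂ := by
  unfold crossProd; fun_prop

variable [Fintype n] [DecidableEq n]

instance : BorelSpace (unitaryGroup n ℂ) := ⟨rfl⟩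

@[fun_prop]
theorem continuous_entry (i j : n) : Continuous fun U : unitaryGroup n ℂ => U.1 i j :=
  (continuous_apply_apply i j).comp continuous_subtype_val

@[fun_prop]
theorem continuous_row (i : n) : Continuous fun U : unitaryGroup n ℂ => U.1 i :=
  (continuous_apply i).comp continuous_subtype_val

theorem integrable_of_continuous {μ : Measure (unitaryGroup n ℂ)} [IsFiniteMeasure μ]
    {f : unitaryGroup n ℂ → ℂ} (hf : Continuous f) : Integrable f μ :=
  hf.integrable_of_hasCompactSupport (HasCompactSupport.of_compactSpace f)

-- Averaging over the sign of row `i₂` cancels the terms of odd degree in that row; the last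
-- two terms have degree `± 2` in it.
theorem normSqProd_givens_mul_add {i₁ i₂ : n} (hi : i₁ ≠ i₂) (c s : ℝ) (j₁ j₂ : n)
    (M : Matrix n n ℂ) :
    normSqProd (givens i₁ i₂ c s * M) i₁ j₁ i₂ j₂
        + normSqProd (givens i₁ i₂ c s * ((rowPhase i₂ (-1)).1 * M)) i₁ j₁ i₂ j₂
      = 2 * c ^ 2 * s ^ 2 * (normSqProd M i₁ j₁ i₁ j₂ + normSqProd M i₂ j₁ i₂ j₂)
        + 2 * c ^ 4 * normSqProd M i₁ j₁ i₂ j₂ + 2 * s ^ 4 * normSqProd M i₂ j₁ i₁ j₂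
        - 2 * c ^ 2 * s ^ 2 * (crossProd M i₁ i₂ j₁ j₂ + crossProd M i₁ i₂ j₂ j₁)
        - 2 * c ^ 2 * s ^ 2 * (M i₁ j₁ * conj (M i₂ j₁) * M i₁ j₂ * conj (M i₂ j₂))
        - 2 * c ^ 2 * s ^ 2 * (M i₂ j₁ * conj (M i₁ j₁) * M i₂ j₂ * conj (M i₁ j₂)) := by
  simp only [normSqProd, crossProd, givens_mul_apply_left hi, givens_mul_apply_right hi,
    rowPhase_val_mul_apply, Function.update_self, Function.update_of_ne hi, Pi.one_apply,
    Unitary.coe_neg, OneMemClass.coe_one, one_mul, map_add, map_mul, map_neg, map_one,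
    Complex.conj_ofReal]
  ring

variable (μ : Measure (unitaryGroup n ℂ))

noncomputable def normSqMoment (i₁ j₁ i₂ j₂ : n) : ℂ :=
  ∫ U, normSqProd U.1 i₁ j₁ i₂ j₂ ∂μ

noncomputable def crossMoment (i₁ i₂ j₁ j₂ : n) : ℂ :=
  ∫ U, crossProd U.1 i₁ i₂ j₁ j₂ ∂μ

theorem normSqMoment_comm (i₁ j₁ i₂ j₂ : n) :
    normSqMoment μ i₂ j₂ i₁ j₁ = normSqMoment μ i₁ j₁ i₂ j₂ := by
  simp only [normSqMoment, normSqProd, mul_comm]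

section LeftInvariant

variable [μ.IsMulLeftInvariant]

theorem integral_comp_submatrix (σ : Equiv.Perm n) (f : Matrix n n ℂ → ℂ) :
    ∫ U, f (U.1.submatrix σ id) ∂μ = ∫ U, f U.1 ∂μ := by
  simpa only [permUnitary_mul_val] using integral_mul_left_eq_self (fun U => f U.1) (permUnitary σ)

theorem normSqMoment_comp_perm (σ : Equiv.Perm n) (i₁ j₁ i₂ j₂ : n) :
    normSqMoment μ (σ i₁) j₁ (σ i₂) j₂ = normSqMoment μ i₁ j₁ i₂ j₂ :=
  integral_comp_submatrix μ σ fun M => normSqProd M i₁ j₁ i₂ j₂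

theorem integral_entry_mul_conj_mul_entry_mul_conj_eq_zero {i₁ i₂ : n} (hi : i₁ ≠ i₂)
    (j₁ j₂ : n) :
    ∫ U, U.1 i₁ j₁ * conj (U.1 i₂ j₁) * U.1 i₁ j₂ * conj (U.1 i₂ j₂) ∂μ = 0 := by
  refine integral_eq_zero_of_mul_left_eq_neg
    (g := rowPhase i₂ ⟨Complex.I, by simp [Unitary.mem_iff]⟩) fun U => ?_
  simp only [UnitaryGroup.mul_val, rowPhase_val_mul_apply, Function.update_self,
    Function.update_of_ne hi, Pi.one_apply, one_mul, map_mul, Complex.conj_I]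
  linear_combination (U.1 i₁ j₁ * conj (U.1 i₂ j₁) * U.1 i₁ j₂ * conj (U.1 i₂ j₂)) *
    Complex.I_mul_I

variable [IsProbabilityMeasure μ]

theorem card_mul_integral_conj_mul_entry (i j : n) :
    (Fintype.card n : ℂ) * ∫ U, conj (U.1 i j) * U.1 i j ∂μ = 1 := by
  have hrow : ∀ k, ∫ U, conj (U.1 k j) * U.1 k j ∂μ = ∫ U, conj (U.1 i j) * U.1 i j ∂μ :=
    fun k => by simpa using integral_comp_submatrix μ (Equiv.swap i k) fun M => conj (M i j) * M i j
  calc (Fintype.card n : ℂ) * ∫ U, conj (U.1 i j) * U.1 i j ∂μ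
      = ∑ k, ∫ U, conj (U.1 k j) * U.1 k j ∂μ := by simp [hrow]
    _ = 1 := by
      rw [← integral_finsetSum _ fun k _ => integrable_of_continuous (by fun_prop)]
      simp [UnitaryGroup.sum_conj_mul_apply]

theorem integral_conj_mul_entry_add_card_sub_one_mul {i₁ i₂ : n} (hi : i₁ ≠ i₂) (j j' : n)
    {g : (n → ℂ) → ℂ} (hg : Continuous g) :
    ∫ U, conj (U.1 i₁ j) * U.1 i₁ j' * g (U.1 i₁) ∂μ
        + (Fintype.card n - 1) * ∫ U, conj (U.1 i₂ j) * U.1 i₂ j' * g (U.1 i₁) ∂μ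
      = if j = j' then ∫ U, g (U.1 i₁) ∂μ else 0 := by
  have htransfer : ∀ i ≠ i₁, ∫ U, conj (U.1 i j) * U.1 i j' * g (U.1 i₁) ∂μ
      = ∫ U, conj (U.1 i₂ j) * U.1 i₂ j' * g (U.1 i₁) ∂μ := fun i hi₁ => by
    simpa [Equiv.swap_apply_of_ne_of_ne hi₁.symm hi] using integral_comp_submatrix μ
      (Equiv.swap i i₂) fun M => conj (M i₂ j) * M i₂ j' * g fun k => M i₁ k
  rw [← Fintype.sum_eq_add_card_sub_one_mul i₁ htransfer,
    ← integral_finsetSum _ fun i _ => integrable_of_continuous (by fun_prop)]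
  simp_rw [← Finset.sum_mul, UnitaryGroup.sum_conj_mul_apply]
  split_ifs <;> simp

theorem normSqMoment_add_card_sub_one_mul {i₁ i₂ : n} (hi : i₁ ≠ i₂) (j₁ j₂ : n) :
    normSqMoment μ i₁ j₁ i₁ j₂ + (Fintype.card n - 1) * normSqMoment μ i₁ j₁ i₂ j₂
      = ∫ U, conj (U.1 i₁ j₁) * U.1 i₁ j₁ ∂μ := by
  have h := integral_conj_mul_entry_add_card_sub_one_mul μ hi j₂ j₂
    (g := fun r => conj (r j₁) * r j₁) (by fun_prop)
  rw [if_pos rfl] at h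
  rw [← normSqMoment_comm, ← normSqMoment_comm μ i₁ j₁]
  exact h

theorem normSqMoment_add_card_sub_one_mul_crossMoment {i₁ i₂ j₁ j₂ : n} (hi : i₁ ≠ i₂)
    (hj : j₁ ≠ j₂) :
    normSqMoment μ i₁ j₁ i₁ j₂ + (Fintype.card n - 1) * crossMoment μ i₁ i₂ j₁ j₂ = 0 := by
  have h := integral_conj_mul_entry_add_card_sub_one_mul μ hi j₂ j₁
    (g := fun r => conj (r j₁) * r j₂) (by fun_prop)
  rw [if_neg hj.symm] at h
  unfold normSqMoment crossMoment normSqProd crossProd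
  simpa only [mul_comm, mul_assoc, mul_left_comm] using h

theorem two_mul_normSqMoment {i₁ i₂ : n} (hi : i₁ ≠ i₂) (j₁ j₂ : n) :
    2 * normSqMoment μ i₁ j₁ i₂ j₂
      = 2 * normSqMoment μ i₁ j₁ i₁ j₂ - crossMoment μ i₁ i₂ j₁ j₂ - crossMoment μ i₁ i₂ j₂ j₁ := by
  -- the Pythagorean cosine `3/5` and sine `4/5` avoid square roots
  set R : unitaryGroup n ℂ :=
    ⟨givens i₁ i₂ (3 / 5) (4 / 5), givens_mem_unitaryGroup hi (by norm_num)⟩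
  set D : unitaryGroup n ℂ := rowPhase i₂ (-1)
  have hexpand : 2 * normSqMoment μ i₁ j₁ i₂ j₂
      = ∫ U, (normSqProd (R * U).1 i₁ j₁ i₂ j₂ + normSqProd (R * (D * U)).1 i₁ j₁ i₂ j₂) ∂μ := by
    have hint : Integrable (fun U => normSqProd U.1 i₁ j₁ i₂ j₂) μ :=
      integrable_of_continuous (by fun_prop)
    rw [integral_add (hint.comp_mul_left R) ((hint.comp_mul_left R).comp_mul_left D)]
    rw [integral_mul_left_eq_self (fun U => normSqProd (R * U).1 i₁ j₁ i₂ j₂) D,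
      integral_mul_left_eq_self (fun U => normSqProd U.1 i₁ j₁ i₂ j₂) R]
    exact two_mul _
  simp only [UnitaryGroup.mul_val, R, D, normSqProd_givens_mul_add hi] at hexpand
  simp (disch := exact integrable_of_continuous (by fun_prop)) only [integral_add,
    integral_sub, integral_const_mul, integral_entry_mul_conj_mul_entry_mul_conj_eq_zero μ hi,
    integral_entry_mul_conj_mul_entry_mul_conj_eq_zero μ hi.symm] at hexpand
  simp only [← normSqMoment.eq_1, ← crossMoment.eq_1] at hexpand
  have hswap₁ : normSqMoment μ i₂ j₁ i₂ j₂ = normSqMoment μ i₁ j₁ i₁ j₂ := by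
    simpa using normSqMoment_comp_perm μ (Equiv.swap i₁ i₂) i₁ j₁ i₁ j₂
  have hswap₂ : normSqMoment μ i₂ j₁ i₁ j₂ = normSqMoment μ i₁ j₁ i₂ j₂ := by
    simpa using normSqMoment_comp_perm μ (Equiv.swap i₁ i₂) i₁ j₁ i₂ j₂
  rw [hswap₁, hswap₂] at hexpand
  push_cast at hexpand
  linear_combination (625 / 288) * hexpand

theorem crossMoment_eq {i₁ i₂ j₁ j₂ : n} (hi : i₁ ≠ i₂) (hj : j₁ ≠ j₂) :
    crossMoment μ i₁ i₂ j₁ j₂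
      = -(1 / ((Fintype.card n : ℂ) * ((Fintype.card n : ℂ) ^ 2 - 1))) := by
  set N := Fintype.card n
  have hN : 2 ≤ N := Fintype.one_lt_card_iff.mpr ⟨i₁, i₂, hi⟩
  have hD : (N : ℂ) * (N ^ 2 - 1) ≠ 0 := by
    have : (0 : ℤ) < N * (N ^ 2 - 1) := by nlinarith
    exact_mod_cast this.ne'
  have hS := card_mul_integral_conj_mul_entry μ i₁ j₁
  have hB := normSqMoment_add_card_sub_one_mul μ hi j₁ j₂
  have hE₁ := normSqMoment_add_card_sub_one_mul_crossMoment μ hi hj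
  have hE₂ := normSqMoment_add_card_sub_one_mul_crossMoment μ hi hj.symm
  have hG := two_mul_normSqMoment μ hi j₁ j₂
  rw [normSqMoment_comm] at hE₂
  rw [← neg_div, eq_div_iff hD]
  linear_combination (N * (2 * N + 1) / 2 : ℂ) * hE₁ - (N / 2 : ℂ) * hE₂ - (N : ℂ) * hB - hS
    + (N * (N - 1) / 2 : ℂ) * hG

end LeftInvariant

end UnitaryHaar

theorem fourth_moment_haar_unitary_cross_general
    (d : ℕ)
    (μH : Measure (Matrix.unitaryGroup (Fin d) ℂ))
    [μH.IsHaarMeasure] [IsProbabilityMeasure μH]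
    (i₁ i₂ j₁ j₂ : Fin d) (hi : i₁ ≠ i₂) (hj : j₁ ≠ j₂) :
    ∫ U : Matrix.unitaryGroup (Fin d) ℂ,
        (starRingEnd ℂ) ((U : Matrix (Fin d) (Fin d) ℂ) i₁ j₁) *
          (starRingEnd ℂ) ((U : Matrix (Fin d) (Fin d) ℂ) i₂ j₂) *
          (U : Matrix (Fin d) (Fin d) ℂ) i₁ j₂ *
          (U : Matrix (Fin d) (Fin d) ℂ) i₂ j₁ ∂μH
      = -(1 / ((d : ℂ) * ((d : ℂ) ^ 2 - 1))) := by
  have h := UnitaryHaar.crossMoment_eq μH hi hj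
  rw [Fintype.card_fin] at h
  exact h

/-- **Fourth-moment Haar integral, off-diagonal pairing.** For `d ≥ 2`, indices
`i₁ ≠ i₂`, `j₁ ≠ j₂`,
`∫ conj(U_{i₁ j₁}) conj(U_{i₂ j₂}) U_{i₁ j₂} U_{i₂ j₁} dμ_H(U) = −1/(d(d² − 1))`. -/
theorem fourth_moment_haar_unitary_cross
    (d : ℕ) (hd : 2 ≤ d)
    (μH : Measure (Matrix.unitaryGroup (Fin d) ℂ))
    [μH.IsHaarMeasure] [IsProbabilityMeasure μH]
    (i₁ i₂ j₁ j₂ : Fin d) (hi : i₁ ≠ i₂) (hj : j₁ ≠ j₂) :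
    ∫ U : Matrix.unitaryGroup (Fin d) ℂ,
        (starRingEnd ℂ) ((U : Matrix (Fin d) (Fin d) ℂ) i₁ j₁) *
          (starRingEnd ℂ) ((U : Matrix (Fin d) (Fin d) ℂ) i₂ j₂) *
          (U : Matrix (Fin d) (Fin d) ℂ) i₁ j₂ *
          (U : Matrix (Fin d) (Fin d) ℂ) i₂ j₁ ∂μH
      = -(1 / ((d : ℂ) * ((d : ℂ) ^ 2 - 1))) :=
  fourth_moment_haar_unitary_cross_general d μH i₁ i₂ j₁ j₂ hi hj
end
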